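/- arXiv:math/0202152 — 3 statements merged into one kernel-verified Lean document; each statement's English description precedes it below -/
import Mathlib

section
/- Let n ≥ 5. Set A := μₙ∘μₙ₋₁∘∂₂, B := μₙ∘μₙ₋₂∘∂₁, C := μₙ∘μₙ₋₁∘∂₁, D := μₙ∘μₙ₋₂∘∂₂ in End(Λ). Then (A∘B + B∘A) − (C∘D + D∘C) = 0. This realizes the second defining relation (the relation of lowest weight 2εₙ + εₙ₋₁ + εₙ₋₂ − ε₁ − ε₂) in the presentation of N₊ of vect(0|n) given in the paper's Table 2.2.1. -/
/-- The exterior algebra Λ of ℂⁿ. -/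
noncomputable abbrev Lam (n : ℕ) := ExteriorAlgebra ℂ (Fin n → ℂ)

/-- The generator ξᵢ of Λ (image of the i-th standard basis vector). -/
noncomputable def xi (n : ℕ) (i : Fin n) : Lam n :=
  ExteriorAlgebra.ι ℂ (Pi.single i 1)

/-- μᵢ : left exterior multiplication by ξᵢ. -/
noncomputable def mu (n : ℕ) (i : Fin n) : Module.End ℂ (Lam n) :=
  LinearMap.mulLeft ℂ (xi n i)

/-- `IsContraction n i D` says that `D` is the contraction ∂ᵢ with the i-th dual
basis vector: it kills 1, sends ξⱼ to δᵢⱼ·1, and is a superderivation, i.e.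
∂ᵢ(xy) = ∂ᵢ(x)y + (−1)ᵖ x ∂ᵢ(y) whenever x is a product of p generators. -/
def IsContraction (n : ℕ) (i : Fin n) (D : Module.End ℂ (Lam n)) : Prop :=
  D 1 = 0 ∧
  (∀ j : Fin n, D (xi n j) = if i = j then 1 else 0) ∧
  (∀ (p : ℕ) (g : Fin p → Fin n) (y : Lam n),
    D ((List.ofFn fun k => xi n (g k)).prod * y) =
      D ((List.ofFn fun k => xi n (g k)).prod) * y +
        ((-1 : ℂ) ^ p) • ((List.ofFn fun k => xi n (g k)).prod * D y))

/-- Moving a contraction past a single distinct generator picks up a sign. -/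
lemma contraction_mul_xi {n : ℕ} {i j : Fin n} {D : Module.End ℂ (Lam n)}
    (hD : IsContraction n i D) (hij : i ≠ j) (y : Lam n) :
    D (xi n j * y) = -(xi n j * D y) := by
  obtain ⟨h1, h2, h3⟩ := hD
  have := h3 1 (fun _ => j) y
  have hl : (List.ofFn fun _ : Fin 1 => xi n j).prod = xi n j := by
    simp [List.ofFn_succ]
  rw [hl] at this
  rw [this, h2 j, if_neg hij]
  simp

/-- Moving a contraction past two distinct generators. -/
lemma contraction_mul_xi2 {n : ℕ} {i p q : Fin n} {D : Module.End ℂ (Lam n)}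
    (hD : IsContraction n i D) (hip : i ≠ p) (hiq : i ≠ q) (y : Lam n) :
    D (xi n p * (xi n q * y)) = xi n p * (xi n q * D y) := by
  rw [contraction_mul_xi hD hip, contraction_mul_xi hD hiq]
  simp [mul_neg]

lemma xi_triple {n : ℕ} (a b : Fin n) (z : Lam n) :
    xi n a * (xi n b * (xi n a * z)) = 0 := by
  have hswap : xi n b * xi n a = -(xi n a * xi n b) := by
    unfold xi
    exact eq_neg_of_add_eq_zero_left
      (by rw [add_comm]; exact ExteriorAlgebra.ι_add_mul_swap _ _)
  have hsq : xi n a * xi n a = 0 := ExteriorAlgebra.ι_sq_zero _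
  calc xi n a * (xi n b * (xi n a * z)) = (xi n a * (xi n b * xi n a)) * z := by
        rw [mul_assoc, mul_assoc]
    _ = 0 := by rw [hswap, mul_neg, ← mul_assoc, hsq]; simp

/-- for n ≥ 5, with A = μₙ∘μₙ₋₁∘∂₂, B = μₙ∘μₙ₋₂∘∂₁, C = μₙ∘μₙ₋₁∘∂₁,
D = μₙ∘μₙ₋₂∘∂₂, one has {A,B} − {C,D} = 0, realizing relation 2 (lowest weight
2εₙ + εₙ₋₁ + εₙ₋₂ − ε₁ − ε₂) of Table 2.2.1. (Indices 0-based.) -/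
theorem vect_relation2 (n : ℕ) (hn : 5 ≤ n)
    (pd : Fin n → Module.End ℂ (Lam n))
    (hpd : ∀ i, IsContraction n i (pd i))
    (A B C D : Module.End ℂ (Lam n))
    (hA : A = mu n ⟨n - 1, by omega⟩ ∘ₗ mu n ⟨n - 2, by omega⟩ ∘ₗ pd ⟨1, by omega⟩)
    (hB : B = mu n ⟨n - 1, by omega⟩ ∘ₗ mu n ⟨n - 3, by omega⟩ ∘ₗ pd ⟨0, by omega⟩)
    (hC : C = mu n ⟨n - 1, by omega⟩ ∘ₗ mu n ⟨n - 2, by omega⟩ ∘ₗ pd ⟨0, by omega⟩)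
    (hD : D = mu n ⟨n - 1, by omega⟩ ∘ₗ mu n ⟨n - 3, by omega⟩ ∘ₗ pd ⟨1, by omega⟩) :
    (A ∘ₗ B + B ∘ₗ A) - (C ∘ₗ D + D ∘ₗ C) = 0 := by
  set a : Fin n := ⟨n - 1, by omega⟩
  set b : Fin n := ⟨n - 2, by omega⟩
  set c : Fin n := ⟨n - 3, by omega⟩
  set i0 : Fin n := ⟨0, by omega⟩
  set i1 : Fin n := ⟨1, by omega⟩
  have h0a : i0 ≠ a := by simp only [i0, a, ne_eq, Fin.mk.injEq]; omega
  have h0b : i0 ≠ b := by simp only [i0, b, ne_eq, Fin.mk.injEq]; omega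
  have h0c : i0 ≠ c := by simp only [i0, c, ne_eq, Fin.mk.injEq]; omega
  have h1a : i1 ≠ a := by simp only [i1, a, ne_eq, Fin.mk.injEq]; omega
  have h1b : i1 ≠ b := by simp only [i1, b, ne_eq, Fin.mk.injEq]; omega
  have h1c : i1 ≠ c := by simp only [i1, c, ne_eq, Fin.mk.injEq]; omega
  have key : ∀ (p q : Fin n) (i j : Fin n), i ≠ a → i ≠ q →
      ∀ y : Lam n,
        mu n a (mu n p (pd i (mu n a (mu n q (pd j y))))) = 0 := by
    intro p q i j hia hiq y
    simp only [mu, LinearMap.mulLeft_apply]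
    rw [contraction_mul_xi2 (hpd i) hia hiq, xi_triple]
  apply LinearMap.ext; intro y
  rw [hA, hB, hC, hD]
  simp only [LinearMap.sub_apply, LinearMap.add_apply, LinearMap.comp_apply,
    LinearMap.zero_apply]
  rw [key b c i1 i0 h1a h1c y, key c b i0 i1 h0a h0b y,
      key b c i0 i1 h0a h0c y, key c b i1 i0 h1a h1b y]
  simp
end

section
/- Let n ≥ 3. The odd endomorphisms E := Σ_{i=1}^{n} μₙ∘μᵢ∘∂ᵢ and D := μₙ∘μₙ₋₁∘∂₁ of Λ satisfy E∘D + D∘E = 0. This realizes the defining relation of lowest weight 2εₙ + εₙ₋₁ − ε₁ (relation 7 of the paper's Table 2.2.1) in the presentation of N₊ of vect(0|n). -/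
lemma xi_sq (n : ℕ) (a : Fin n) (z : Lam n) : xi n a * (xi n a * z) = 0 := by
  rw [← mul_assoc, xi, ExteriorAlgebra.ι_sq_zero, zero_mul]

lemma xi_anticomm (n : ℕ) (a b : Fin n) : xi n a * xi n b = -(xi n b * xi n a) := by
  have h := ExteriorAlgebra.ι_sq_zero (R := ℂ)
    ((Pi.single a 1 : Fin n → ℂ) + (Pi.single b 1 : Fin n → ℂ))
  rw [map_add, add_mul, mul_add, mul_add] at h
  have ha := ExteriorAlgebra.ι_sq_zero (R := ℂ) (Pi.single a 1 : Fin n → ℂ)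
  have hb := ExteriorAlgebra.ι_sq_zero (R := ℂ) (Pi.single b 1 : Fin n → ℂ)
  rw [ha, hb] at h
  simp only [zero_add, add_zero] at h
  have := eq_neg_of_add_eq_zero_left h
  simpa [xi] using this

lemma xi_aba (n : ℕ) (a b : Fin n) (z : Lam n) :
    xi n a * (xi n b * (xi n a * z)) = 0 := by
  rw [← mul_assoc, xi_anticomm n a b, neg_mul, mul_assoc, xi_sq, mul_zero, neg_zero]

lemma pd_mul (n : ℕ) (i : Fin n) (Dop : Module.End ℂ (Lam n))
    (h : IsContraction n i Dop) (j : Fin n) (y : Lam n) :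
    Dop (xi n j * y) = (if i = j then y else 0) - xi n j * Dop y := by
  have h3 := h.2.2 1 (fun _ => j) y
  simp only [List.ofFn_succ, List.ofFn_zero, List.prod_cons, List.prod_nil, mul_one,
    pow_one, neg_smul, one_smul] at h3
  rw [h3, h.2.1 j]
  by_cases hij : i = j <;> simp [hij, sub_eq_add_neg]

/-- for n ≥ 3, the odd operators E = Σᵢ μₙ∘μᵢ∘∂ᵢ and
D = μₙ∘μₙ₋₁∘∂₁ satisfy E∘D + D∘E = 0, realizing the relation of lowest weight
2εₙ + εₙ₋₁ − ε₁ (relation 7 of Table 2.2.1). (Indices 0-based.) -/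
theorem vect_relation7 (n : ℕ) (hn : 3 ≤ n)
    (pd : Fin n → Module.End ℂ (Lam n))
    (hpd : ∀ i, IsContraction n i (pd i))
    (E D : Module.End ℂ (Lam n))
    (hE : E = ∑ i : Fin n, mu n ⟨n - 1, by omega⟩ ∘ₗ mu n i ∘ₗ pd i)
    (hD : D = mu n ⟨n - 1, by omega⟩ ∘ₗ mu n ⟨n - 2, by omega⟩ ∘ₗ pd ⟨0, by omega⟩) :
    E ∘ₗ D + D ∘ₗ E = 0 := by
  set N1 : Fin n := ⟨n - 1, by omega⟩ with hN1
  set N2 : Fin n := ⟨n - 2, by omega⟩ with hN2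
  set Z : Fin n := ⟨0, by omega⟩ with hZ
  subst hE hD
  refine LinearMap.ext fun x => ?_
  simp only [LinearMap.add_apply, LinearMap.comp_apply, LinearMap.coe_sum,
    Finset.sum_apply, LinearMap.zero_apply, map_sum]
  have muapp : ∀ (j : Fin n) (y : Lam n), mu n j y = xi n j * y := fun j y => rfl
  have h1 : ∀ i : Fin n,
      mu n N1 (mu n i (pd i (mu n N1 (mu n N2 (pd Z x))))) = 0 := by
    intro i
    rw [muapp N1 (mu n N2 (pd Z x)), pd_mul n i (pd i) (hpd i) N1, muapp, muapp]
    by_cases hi : i = N1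
    · subst hi; simp [xi_sq]
    · rw [if_neg hi]; simp [mul_sub, xi_aba, xi_sq]
  have h2 : ∀ i : Fin n,
      mu n N1 (mu n N2 (pd Z (mu n N1 (mu n i (pd i x))))) = 0 := by
    intro i
    rw [muapp N1 (mu n i (pd i x)), pd_mul n Z (pd Z) (hpd Z) N1]
    have hZN1 : Z ≠ N1 := by
      intro h
      have := congrArg Fin.val h
      simp [hZ, hN1] at this
      omega
    rw [if_neg hZN1, muapp, muapp]
    simp [mul_sub, xi_aba, xi_sq]
  rw [Finset.sum_congr rfl (fun i _ => h1 i), Finset.sum_congr rfl (fun i _ => h2 i)]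
  simp
end

section
/- (Periplectic relations, case (b): g₁ = Λ²(id), g₋₁ = S²(id*).) Let n ≥ 4. Let X⁺ be the odd matrix whose upper-right block is E_{n,n+1} − E_{n+1,n} and whose other blocks are zero (the lowest weight vector of the g₀-module g₁), and let X⁻ be the odd matrix whose lower-left block is E_{n+1,n+1} and whose other blocks are zero (the highest weight vector of g₋₁). Then, with all brackets the superbracket: (i) [Xₙ⁺, [Xₙ⁺, X⁺]] = 0; (ii) [Xᵢ⁺, X⁺] = 0 for all 1 ≤ i ≤ n−2, and [Xₙ₋₁⁺, [Xₙ₋₁⁺, X⁺]] = 0; (iii) [X⁺, X⁺] = 0 and [X⁻, X⁻] = 0; (iv) [Xᵢ⁻, X⁻] = 0 for all 1 ≤ i ≤ n−1, and [Xₙ⁻, [Xₙ⁻, [Xₙ⁻, X⁻]]] = 0 while [Xₙ⁻, [Xₙ⁻, X⁻]] ≠ 0; (v) the periplectic relations [X⁺, [Xₙ⁺, [Xₙ⁺, X⁺]]] = 0 and [X⁻, [Xₙ⁻, [Xₙ₋₁⁻, X⁻]]] = 0 hold. These are the defining relations of case (b) of §2.2.4 of the paper, for the Lie superalgebra spe(n+1)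 with its other compatible ℤ-grading. -/
/-- gl(n+1|n+1) realized as 2(n+1) × 2(n+1) complex matrices in 2 × 2 block
form, the two blocks of rows/columns indexed by the two copies of `Fin (n+1)`. -/
abbrev GLmat (n : ℕ) := Matrix (Fin (n + 1) ⊕ Fin (n + 1)) (Fin (n + 1) ⊕ Fin (n + 1)) ℂ

/-- The (n+1) × (n+1) matrix unit E_{a,b}. -/
noncomputable def Eunit (n : ℕ) (a b : Fin (n + 1)) : Matrix (Fin (n + 1)) (Fin (n + 1)) ℂ :=
  Matrix.single a b 1

/-- Xᵢ⁺ (for i : Fin n, 0-based; paper's X_{i+1}⁺): the even matrix with diagonal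
blocks (E_{i,i+1}, −E_{i+1,i}) and zero off-diagonal blocks. -/
noncomputable def Xp (n : ℕ) (i : Fin n) : GLmat n :=
  Matrix.fromBlocks (Eunit n i.castSucc i.succ) 0 0 (-(Eunit n i.succ i.castSucc))

/-- Xᵢ⁻ (for i : Fin n, 0-based; paper's X_{i+1}⁻): the even matrix with diagonal
blocks (E_{i+1,i}, −E_{i,i+1}) and zero off-diagonal blocks. -/
noncomputable def Xm (n : ℕ) (i : Fin n) : GLmat n :=
  Matrix.fromBlocks (Eunit n i.succ i.castSucc) 0 0 (-(Eunit n i.castSucc i.succ))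

/-- The superbracket of two even, or an even and an odd, matrix: the commutator. -/
noncomputable def scomm {n : ℕ} (A B : GLmat n) : GLmat n := A * B - B * A

/-- The superbracket of two odd matrices: the anticommutator. -/
noncomputable def sacomm {n : ℕ} (A B : GLmat n) : GLmat n := A * B + B * A

/-!
An even matrix `diag(A, -Aᵀ)` acts on the odd upper-right block by `B ↦ A B + B Aᵀ` and on the
odd lower-left block by `C ↦ -(Aᵀ C + C A)`, i.e. as `gl(n+1)` on `V ⊗ V` and on its dual. As
`Xᵢ⁺` and `Xᵢ⁻` have upper-left blocks `E_{xy}` and `E_{yx}` (with `x = i`, `y = i + 1`), both act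
through the same map `unitAct x y` up to sign, so every relation reduces to a few products of
matrix units. Two odd matrices supported in the same off-diagonal block have zero
products, which gives (iii) and (v).
-/

open Matrix

section Blocks

variable {n : ℕ}

theorem scomm_fromBlocks_diagonal_upperRight (A D B : Matrix (Fin (n + 1)) (Fin (n + 1)) ℂ) :
    scomm (fromBlocks A 0 0 D) (fromBlocks 0 B 0 0) = fromBlocks 0 (A * B - B * D) 0 0 := by
  simp [scomm, fromBlocks_multiply, sub_eq_add_neg, fromBlocks_neg, fromBlocks_add]

theorem scomm_fromBlocks_diagonal_lowerLeft (A D C : Matrix (Fin (n + 1)) (Fin (n + 1)) ℂ) :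
    scomm (fromBlocks A 0 0 D) (fromBlocks 0 0 C 0) = fromBlocks 0 0 (D * C - C * A) 0 := by
  simp [scomm, fromBlocks_multiply, sub_eq_add_neg, fromBlocks_neg, fromBlocks_add]

theorem sacomm_fromBlocks_upperRight (B B' : Matrix (Fin (n + 1)) (Fin (n + 1)) ℂ) :
    sacomm (fromBlocks 0 B 0 0) (fromBlocks 0 B' 0 0) = 0 := by
  simp [sacomm, fromBlocks_multiply]

theorem sacomm_fromBlocks_lowerLeft (C C' : Matrix (Fin (n + 1)) (Fin (n + 1)) ℂ) :
    sacomm (fromBlocks 0 0 C 0) (fromBlocks 0 0 C' 0) = 0 := by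
  simp [sacomm, fromBlocks_multiply]

end Blocks

section UnitAction

variable {n : ℕ}

/-- `E_{xy}` acting on `V ⊗ V ≅ Matrix`, i.e. `M ↦ E_{xy} M + M E_{xy}ᵀ`. -/
noncomputable def unitAct (x y : Fin (n + 1)) :
    Matrix (Fin (n + 1)) (Fin (n + 1)) ℂ →ₗ[ℂ] Matrix (Fin (n + 1)) (Fin (n + 1)) ℂ :=
  LinearMap.mulLeft ℂ (Eunit n x y) + LinearMap.mulRight ℂ (Eunit n y x)

theorem unitAct_apply (x y : Fin (n + 1)) (M : Matrix (Fin (n + 1)) (Fin (n + 1)) ℂ) :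
    unitAct x y M = Eunit n x y * M + M * Eunit n y x :=
  rfl

theorem Eunit_mul_Eunit (a b c d : Fin (n + 1)) :
    Eunit n a b * Eunit n c d = if b = c then Eunit n a d else 0 := by
  split_ifs with h
  · subst h; simp [Eunit]
  · exact single_mul_single_of_ne (c := (1 : ℂ)) a b c h 1

theorem Eunit_ne_zero (a b : Fin (n + 1)) : Eunit n a b ≠ 0 := fun h => by
  simpa [Eunit] using congrFun (congrFun h a) b

theorem scomm_Xp_upperRight (i : Fin n) (B : Matrix (Fin (n + 1)) (Fin (n + 1)) ℂ) :
    scomm (Xp n i) (fromBlocks 0 B 0 0) = fromBlocks 0 (unitAct i.castSucc i.succ B) 0 0 := by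
  rw [Xp, scomm_fromBlocks_diagonal_upperRight, unitAct_apply, mul_neg, sub_neg_eq_add]

theorem scomm_Xm_lowerLeft (i : Fin n) (C : Matrix (Fin (n + 1)) (Fin (n + 1)) ℂ) :
    scomm (Xm n i) (fromBlocks 0 0 C 0) = fromBlocks 0 0 (-unitAct i.castSucc i.succ C) 0 := by
  rw [Xm, scomm_fromBlocks_diagonal_lowerLeft, unitAct_apply, neg_add, neg_mul, sub_eq_add_neg]

variable {x y a b c : Fin (n + 1)}

theorem unitAct_antisymm_of_ne (hya : y ≠ a) (hyb : y ≠ b) :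
    unitAct x y (Eunit n a b - Eunit n b a) = 0 := by
  simp [unitAct_apply, mul_sub, sub_mul, Eunit_mul_Eunit, hya, hyb, hya.symm, hyb.symm]

theorem unitAct_antisymm_self (hab : a ≠ b) : unitAct a b (Eunit n a b - Eunit n b a) = 0 := by
  simp [unitAct_apply, mul_sub, sub_mul, Eunit_mul_Eunit, hab, hab.symm]

theorem unitAct_antisymm_replace_left (hab : a ≠ b) :
    unitAct c a (Eunit n a b - Eunit n b a) = Eunit n c b - Eunit n b c := by
  simp [unitAct_apply, mul_sub, sub_mul, Eunit_mul_Eunit, hab, hab.symm]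
  abel

theorem unitAct_diag_of_ne (hyb : y ≠ b) : unitAct x y (Eunit n b b) = 0 := by
  simp [unitAct_apply, Eunit_mul_Eunit, hyb, hyb.symm]

theorem unitAct_diag_self : unitAct a b (Eunit n b b) = Eunit n a b + Eunit n b a := by
  simp [unitAct_apply, Eunit_mul_Eunit]

theorem unitAct_symm_self (hab : a ≠ b) :
    unitAct a b (Eunit n a b + Eunit n b a) = (2 : ℂ) • Eunit n a a := by
  simp [unitAct_apply, mul_add, add_mul, Eunit_mul_Eunit, hab, hab.symm, two_smul]

end UnitAction

/-- periplectic relations, case (b): g₁ = Λ²(id), g₋₁ = S²(id*).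
For n ≥ 4, with X⁺ the odd matrix whose upper-right block is E_{n,n+1} − E_{n+1,n}
(the lowest weight vector of g₁) and X⁻ the odd matrix whose lower-left block is
E_{n+1,n+1} (the highest weight vector of g₋₁), the superbracket relations
(i)–(v) of §2.2.4, case (b), hold for spe(n+1).
(Xᵢ of the paper is `Xp n ⟨i−1,_⟩`/`Xm n ⟨i−1,_⟩`; brackets between an even Xᵢ±
and an odd element are commutators, those between two odd elements are
anticommutators.) -/
theorem spe_case_b_relations (n : ℕ) (hn : 4 ≤ n)
    (Xplus Xminus : GLmat n)
    (hXp : Xplus = Matrix.fromBlocks 0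
      (Eunit n ⟨n - 1, by omega⟩ (Fin.last n) - Eunit n (Fin.last n) ⟨n - 1, by omega⟩) 0 0)
    (hXm : Xminus = Matrix.fromBlocks 0 0 (Eunit n (Fin.last n) (Fin.last n)) 0) :
    -- (i) (ad Xₙ⁺)² X⁺ = 0
    scomm (Xp n ⟨n - 1, by omega⟩) (scomm (Xp n ⟨n - 1, by omega⟩) Xplus) = 0 ∧
    -- (ii) [Xᵢ⁺, X⁺] = 0 for 1 ≤ i ≤ n−2 (0-based: i < n−2), and (ad Xₙ₋₁⁺)² X⁺ = 0
    (∀ i : Fin n, (i : ℕ) < n - 2 → scomm (Xp n i) Xplus = 0) ∧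
    scomm (Xp n ⟨n - 2, by omega⟩) (scomm (Xp n ⟨n - 2, by omega⟩) Xplus) = 0 ∧
    -- (iii) [X⁺, X⁺] = 0 and [X⁻, X⁻] = 0
    sacomm Xplus Xplus = 0 ∧ sacomm Xminus Xminus = 0 ∧
    -- (iv) [Xᵢ⁻, X⁻] = 0 for 1 ≤ i ≤ n−1, (ad Xₙ⁻)³ X⁻ = 0 while (ad Xₙ⁻)² X⁻ ≠ 0
    (∀ i : Fin n, (i : ℕ) < n - 1 → scomm (Xm n i) Xminus = 0) ∧
    scomm (Xm n ⟨n - 1, by omega⟩) (scomm (Xm n ⟨n - 1, by omega⟩)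
      (scomm (Xm n ⟨n - 1, by omega⟩) Xminus)) = 0 ∧
    scomm (Xm n ⟨n - 1, by omega⟩) (scomm (Xm n ⟨n - 1, by omega⟩) Xminus) ≠ 0 ∧
    -- (v) the periplectic relations (PeR±)
    sacomm Xplus (scomm (Xp n ⟨n - 1, by omega⟩)
      (scomm (Xp n ⟨n - 1, by omega⟩) Xplus)) = 0 ∧
    sacomm Xminus (scomm (Xm n ⟨n - 1, by omega⟩)
      (scomm (Xm n ⟨n - 2, by omega⟩) Xminus)) = 0 := by
  subst hXp hXm
  set a : Fin (n + 1) := ⟨n - 1, by omega⟩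
  set b : Fin (n + 1) := Fin.last n
  set c : Fin (n + 1) := ⟨n - 2, by omega⟩
  have hab : a ≠ b := by simp [a, b, Fin.ext_iff]; omega
  have hac : a ≠ c := by simp [a, c, Fin.ext_iff]; omega
  have hlast_castSucc : (⟨n - 1, by omega⟩ : Fin n).castSucc = a := rfl
  have hlast_succ : (⟨n - 1, by omega⟩ : Fin n).succ = b := by simp [b, Fin.ext_iff]; omega
  have hprev_castSucc : (⟨n - 2, by omega⟩ : Fin n).castSucc = c := rfl
  have hprev_succ : (⟨n - 2, by omega⟩ : Fin n).succ = a := by simp [a, Fin.ext_iff]; omega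
  simp only [scomm_Xp_upperRight, scomm_Xm_lowerLeft, hlast_castSucc, hlast_succ, hprev_castSucc,
    hprev_succ, sacomm_fromBlocks_upperRight, sacomm_fromBlocks_lowerLeft]
  simp only [map_neg, neg_neg, map_smul, unitAct_antisymm_self hab, unitAct_antisymm_replace_left hab,
    unitAct_antisymm_of_ne hac hab, unitAct_diag_self, unitAct_symm_self hab,
    unitAct_diag_of_ne hab.symm, map_zero, neg_zero, smul_zero]
  refine ⟨fromBlocks_zero, fun i hi => ?_, fromBlocks_zero, trivial, trivial, fun i hi => ?_,
    fromBlocks_zero, ?_, trivial, trivial⟩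
  · rw [unitAct_antisymm_of_ne (by simp [a, Fin.ext_iff]; omega) (by simp [b, Fin.ext_iff]; omega),
      fromBlocks_zero]
  · rw [unitAct_diag_of_ne (by simp [b, Fin.ext_iff]; omega), neg_zero, fromBlocks_zero]
  · rw [← fromBlocks_zero, Ne, fromBlocks_inj]
    exact fun h => smul_ne_zero two_ne_zero (Eunit_ne_zero a a) h.2.2.1
end
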